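/- arXiv:1704.03190 — 2 statements merged into one kernel-verified Lean document; each statement's English description precedes it below -/
import Mathlib

section
/- The map p ↦ exp(p̂) is injective on the open ball of radius π: if p, q ∈ ℝ³ satisfy ‖p‖₂ < π, ‖q‖₂ < π and exp(p̂) = exp(q̂), then p = q. -/
/-!
Since `p̂³ = -‖p‖² p̂`, splitting the exponential series into even and odd terms gives
Rodrigues' formula `exp p̂ = 1 + sinc ‖p‖ • p̂ + ((1 - cos ‖p‖) / ‖p‖²) • p̂²`.
Its trace is `1 + 2 cos ‖p‖`, which determines `‖p‖` on `[0, π]`, and since `p̂` is skew and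
`p̂²` symmetric, its skew part is `sinc ‖p‖ • p̂`, where `sinc ‖p‖ > 0` for `‖p‖ < π`.
-/

open Matrix Real

noncomputable section

/-- The skew-symmetric "hat" matrix of a vector in ℝ³. -/
def hatm (p : Fin 3 → ℝ) : Matrix (Fin 3) (Fin 3) ℝ :=
  !![0, -p 2, p 1; p 2, 0, -p 0; -p 1, p 0, 0]

/-- The Euclidean (ℓ²) norm on ℝ³. -/
def norm2 (p : Fin 3 → ℝ) : ℝ := Real.sqrt (∑ i, p i ^ 2)

open scoped Nat

section PowThree

variable {R A : Type*} [CommSemiring R] [Semiring A] [Algebra R A] {X : A} {c : R}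

theorem pow_two_mul_add_one_of_pow_three (hX : X ^ 3 = c • X) (k : ℕ) :
    X ^ (2 * k + 1) = c ^ k • X := by
  induction k with
  | zero => simp
  | succ k ih =>
    rw [show 2 * (k + 1) + 1 = 2 * k + 1 + 2 by ring, pow_add, ih, smul_mul_assoc,
      ← pow_succ', hX, smul_smul, pow_succ]

theorem pow_two_mul_add_two_of_pow_three (hX : X ^ 3 = c • X) (k : ℕ) :
    X ^ (2 * k + 2) = c ^ k • X ^ 2 := by
  rw [pow_succ, pow_two_mul_add_one_of_pow_three hX, smul_mul_assoc, ← sq]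

end PowThree

section Rodrigues

variable {A : Type*} [Ring A] [Algebra ℝ A] [TopologicalSpace A] [ContinuousSMul ℝ A]
  {X : A} {a : ℝ}

theorem hasSum_exp_odd_of_pow_three (ha : a ≠ 0) (hX : X ^ 3 = -(a ^ 2) • X) :
    HasSum (fun k => ((2 * k + 1)! : ℝ)⁻¹ • X ^ (2 * k + 1)) ((sin a / a) • X) := by
  refine (((hasSum_sin a).div_const a).smul_const X).congr_fun fun k => ?_
  rw [pow_two_mul_add_one_of_pow_three hX, smul_smul, neg_pow, ← pow_mul]
  congr 1
  field_simp
  ring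

theorem hasSum_exp_even_of_pow_three [IsTopologicalAddGroup A] (ha : a ≠ 0)
    (hX : X ^ 3 = -(a ^ 2) • X) :
    HasSum (fun k => ((2 * k)! : ℝ)⁻¹ • X ^ (2 * k)) (1 + ((1 - cos a) / a ^ 2) • X ^ 2) := by
  have hcos : HasSum (fun k => (-1 : ℝ) ^ (k + 1) * a ^ (2 * (k + 1)) / (2 * (k + 1))!)
      (cos a - 1) := by
    simpa using (hasSum_nat_add_iff' 1).mpr (hasSum_cos a)
  have hcoeff : (1 - cos a) / a ^ 2 = (cos a - 1) / -(a ^ 2) := by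
    rw [div_neg, ← neg_div, neg_sub]
  refine (hasSum_nat_add_iff' 1).mp ?_
  simp only [Finset.range_one, Finset.sum_singleton, mul_zero, Nat.factorial_zero, Nat.cast_one,
    inv_one, pow_zero, one_smul, add_sub_cancel_left, hcoeff]
  refine ((hcos.div_const (-(a ^ 2))).smul_const (X ^ 2)).congr_fun fun k => ?_
  rw [mul_add_one, pow_two_mul_add_two_of_pow_three hX, smul_smul, neg_pow, ← pow_mul]
  congr 1
  field_simp
  ring

theorem exp_eq_of_pow_three_eq_neg_sq_smul [IsTopologicalRing A] [T2Space A] (ha : a ≠ 0)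
    (hX : X ^ 3 = -(a ^ 2) • X) :
    NormedSpace.exp X = 1 + (sin a / a) • X + ((1 - cos a) / a ^ 2) • X ^ 2 := by
  rw [congr_fun (NormedSpace.exp_eq_tsum ℝ) X, add_right_comm]
  exact (HasSum.even_add_odd (f := fun n => (n ! : ℝ)⁻¹ • X ^ n)
    (hasSum_exp_even_of_pow_three ha hX) (hasSum_exp_odd_of_pow_three ha hX)).tsum_eq

end Rodrigues

theorem Real.sinc_pos {x : ℝ} (hx : |x| < π) : 0 < sinc x := by
  rcases lt_trichotomy x 0 with hneg | rfl | hpos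
  · rw [sinc_of_ne_zero hneg.ne]
    exact div_pos_of_neg_of_neg (sin_neg_of_neg_of_neg_pi_lt hneg (neg_lt_of_abs_lt hx)) hneg
  · simp
  · rw [sinc_of_ne_zero hpos.ne']
    exact div_pos (sin_pos_of_pos_of_lt_pi hpos (lt_of_abs_lt hx)) hpos

theorem norm2_nonneg (p : Fin 3 → ℝ) : 0 ≤ norm2 p := sqrt_nonneg _

theorem norm2_sq (p : Fin 3 → ℝ) : norm2 p ^ 2 = ∑ i, p i ^ 2 := sq_sqrt (by positivity)

theorem norm2_eq_zero {p : Fin 3 → ℝ} : norm2 p = 0 ↔ p = 0 := by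
  rw [norm2, sqrt_eq_zero (by positivity), Fintype.sum_eq_zero_iff_of_nonneg fun i => sq_nonneg _]
  simp [funext_iff]

theorem hatm_zero : hatm 0 = 0 := by
  ext i j; fin_cases i <;> fin_cases j <;> simp [hatm]

theorem hatm_injective : Function.Injective hatm := by
  intro p q h
  have h0 := congr_fun (congr_fun h 2) 1
  have h1 := congr_fun (congr_fun h 0) 2
  have h2 := congr_fun (congr_fun h 1) 0
  simp only [hatm, of_apply, cons_val, cons_val_zero, cons_val_one] at h0 h1 h2
  ext i; fin_cases i <;> simp [*]

theorem transpose_hatm (p : Fin 3 → ℝ) : (hatm p)ᵀ = -hatm p := by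
  ext i j; fin_cases i <;> fin_cases j <;> simp [hatm]

theorem hatm_pow_three (p : Fin 3 → ℝ) : hatm p ^ 3 = -(norm2 p ^ 2) • hatm p := by
  rw [norm2_sq]
  ext i j
  fin_cases i <;> fin_cases j <;> simp [hatm, pow_succ, mul_apply, Fin.sum_univ_three] <;> ring

theorem trace_hatm (p : Fin 3 → ℝ) : trace (hatm p) = 0 := by
  simp [hatm, trace, Fin.sum_univ_three]

theorem trace_hatm_sq (p : Fin 3 → ℝ) : trace (hatm p ^ 2) = -2 * norm2 p ^ 2 := by
  rw [norm2_sq]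
  simp [hatm, sq, trace, Fin.sum_univ_three]
  ring

theorem exp_hatm (p : Fin 3 → ℝ) :
    NormedSpace.exp (hatm p) =
      1 + sinc (norm2 p) • hatm p + ((1 - cos (norm2 p)) / norm2 p ^ 2) • hatm p ^ 2 := by
  rcases eq_or_ne (norm2 p) 0 with h0 | h0
  · simp [norm2_eq_zero.mp h0, hatm_zero]
  · rw [sinc_of_ne_zero h0]
    exact exp_eq_of_pow_three_eq_neg_sq_smul h0 (hatm_pow_three p)

theorem trace_exp_hatm (p : Fin 3 → ℝ) :
    trace (NormedSpace.exp (hatm p)) = 1 + 2 * cos (norm2 p) := by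
  have hcancel : (1 - cos (norm2 p)) / norm2 p ^ 2 * norm2 p ^ 2 = 1 - cos (norm2 p) :=
    div_mul_cancel_of_imp fun h => by simp [pow_eq_zero_iff two_ne_zero |>.mp h]
  simp only [exp_hatm, trace_add, trace_smul, trace_one, trace_hatm, trace_hatm_sq, smul_eq_mul,
    Fintype.card_fin, mul_zero]
  linear_combination (-2) * hcancel

theorem exp_hatm_sub_transpose (p : Fin 3 → ℝ) :
    NormedSpace.exp (hatm p) - (NormedSpace.exp (hatm p))ᵀ = (2 * sinc (norm2 p)) • hatm p := by
  rw [exp_hatm, transpose_add, transpose_add, transpose_smul, transpose_smul, transpose_pow,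
    transpose_hatm, transpose_one, neg_sq]
  module

/-- p ↦ exp(p̂) is injective on the open ball of radius π. -/
theorem exp_hat_injective_on_ball (p q : Fin 3 → ℝ)
    (hp : norm2 p < Real.pi) (hq : norm2 q < Real.pi)
    (h : NormedSpace.exp (hatm p) = NormedSpace.exp (hatm q)) : p = q := by
  have hnorm : norm2 p = norm2 q := by
    refine injOn_cos ⟨norm2_nonneg p, hp.le⟩ ⟨norm2_nonneg q, hq.le⟩ ?_
    have htrace := congr_arg trace h
    rw [trace_exp_hatm, trace_exp_hatm] at htrace
    linarith
  have hsinc : 2 * sinc (norm2 p) ≠ 0 :=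
    mul_ne_zero two_ne_zero (sinc_pos (by rwa [abs_of_nonneg (norm2_nonneg p)])).ne'
  have hskew := congr_arg (fun E => E - Eᵀ) h
  simp only [exp_hatm_sub_transpose, ← hnorm] at hskew
  exact hatm_injective (smul_right_injective _ hsinc hskew)
end
end

section
/- Strict Lie-derivative bound off consensus: let G be a connected undirected graph on n nodes with m edges and incidence matrix B, let B̂ = B ⊗ I₃, and let x = (x₁,…,xₙ) ∈ ℝ^{3n} satisfy ‖xᵢ‖₂ ≤ r for all i, for some r < π. Assume x is not in consensus, i.e., xᵢ ≠ xⱼ for some i, j. Then for every sign-selection s ∈ ℝ^{3m} for B̂ᵀ x, setting ν = B̂ s, one has νᵀ L_x ν ≥ c(r)/n > 0, where c(θ) = sinc(θ)/sinc²(θ/2). -/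
open Matrix Real

noncomputable section

/-- The unnormalized sinc function: α · sinc α = sin α, sinc 0 = 1. -/
def sinc (α : ℝ) : ℝ := if α = 0 then 1 else Real.sin α / α

/-- c(θ) = sinc(θ)/sinc²(θ/2). -/
def cfun (θ : ℝ) : ℝ := _root_.sinc θ / _root_.sinc (θ / 2) ^ 2

/-- The symmetric part L¹ₓ of the transition matrix (L¹₀ := I₃). -/
def L1mat (x : Fin 3 → ℝ) : Matrix (Fin 3) (Fin 3) ℝ :=
  if x = 0 then 1 else
    cfun (norm2 x) • (1 : Matrix (Fin 3) (Fin 3) ℝ)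
      + ((1 - cfun (norm2 x)) / norm2 x ^ 2) • vecMulVec x x

/-- The transition matrix Lₓ of the axis-angle kinematics (L₀ := I₃). -/
def Lmat (x : Fin 3 → ℝ) : Matrix (Fin 3) (Fin 3) ℝ :=
  if x = 0 then 1 else
    cfun (norm2 x) • (1 : Matrix (Fin 3) (Fin 3) ℝ)
      + ((1 - cfun (norm2 x)) / norm2 x ^ 2) • vecMulVec x x
      + (1 / 2 : ℝ) • hatm x

/-- `s` is a sign-selection for `z`: each component lies in [−1,1] and equals
`sign (z ℓ)` whenever `z ℓ ≠ 0`. -/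
def SignSel {k : Type*} (s z : k → ℝ) : Prop :=
  ∀ ℓ, s ℓ ∈ Set.Icc (-1 : ℝ) 1 ∧ (z ℓ ≠ 0 → s ℓ = Real.sign (z ℓ))

/-- Vector-valued (ℝ³-blocks) sign-selection, componentwise. -/
def SignSelV {m : ℕ} (s z : Fin m → Fin 3 → ℝ) : Prop :=
  ∀ e k, s e k ∈ Set.Icc (-1 : ℝ) 1 ∧ (z e k ≠ 0 → s e k = Real.sign (z e k))

/-!
For `‖x‖ ≤ r < π` the skew part of `Lₓ` drops out of the quadratic form and the symmetric part is
`c(‖x‖) I + (1 - c(‖x‖)) x xᵀ / ‖x‖²`; since `c = (θ/2) cot (θ/2)` is at most `1` and decreasing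
on `[0, π)`, this gives `νᵀ Lₓ ν ≥ c(r) ‖ν‖²`.

For the graph factor pick a coordinate `k` on which the `xᵢ` differ and let `f i = (xᵢ)ₖ`. As `s`
is a sign selection for `Bᵀ f`, `⟪f, B s⟫ = ‖Bᵀ f‖₁ =: Z`, and since the columns of `B` sum to zero
also `⟪f - f_q, B s⟫ = Z`. Along a path of the connected graph each edge is crossed once, so
`|f i - f_q| ≤ Z`, and `Z > 0` because `f` is not constant. Hence `Z ≤ Z ‖B s‖₁ ≤ Z √n ‖B s‖₂`.
-/

lemma sin_div_self_antitoneOn : AntitoneOn (fun x => sin x / x) (Set.Ioc 0 π) := by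
  have h := strictConcaveOn_sin_Icc.concaveOn.antitoneOn_slope_gt
    (Set.left_mem_Icc.mpr pi_pos.le)
  intro a ha b hb hab
  simpa [slope_def_field] using h ⟨Set.Ioc_subset_Icc_self ha, ha.1⟩
    ⟨Set.Ioc_subset_Icc_self hb, hb.1⟩ hab

lemma mul_cos_div_sin_le {u v : ℝ} (hu : 0 < u) (huv : u ≤ v) (hv : v < π / 2) :
    v * cos v / sin v ≤ u * cos u / sin u := by
  have hsu : 0 < sin u := sin_pos_of_pos_of_lt_pi hu (by linarith)
  have hsv : 0 < sin v := sin_pos_of_pos_of_lt_pi (by linarith) (by linarith)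
  rw [div_le_div_iff₀ hsv hsu]
  rcases huv.eq_or_lt with rfl | huv
  · rfl
  -- `sin x / x` decreases from `v - u` to `u + v`; expanding both sines gives the claim.
  have key := sin_div_self_antitoneOn ⟨sub_pos.mpr huv, by linarith⟩ ⟨by linarith, by linarith⟩
    (by linarith : v - u ≤ u + v)
  simp only [sin_add, sin_sub] at key
  rw [div_le_div_iff₀ (by linarith) (by linarith)] at key
  nlinarith

lemma cfun_zero : cfun 0 = 1 := by simp [cfun, _root_.sinc]

lemma cfun_eq_mul_cos_div_sin {θ : ℝ} (hs : sin (θ / 2) ≠ 0) :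
    cfun θ = θ / 2 * cos (θ / 2) / sin (θ / 2) := by
  have hθ2 : θ / 2 ≠ 0 := fun h => hs (by rw [h, sin_zero])
  have hθ : θ ≠ 0 := fun h => hθ2 (by rw [h, zero_div])
  have hsin : sin θ = 2 * sin (θ / 2) * cos (θ / 2) := by
    rw [← sin_two_mul, mul_div_cancel₀ θ two_ne_zero]
  rw [cfun, _root_.sinc, _root_.sinc, if_neg hθ, if_neg hθ2, hsin]
  field_simp

lemma cfun_eq_of_pos {θ : ℝ} (h0 : 0 < θ) (hπ : θ < π) :
    cfun θ = θ / 2 * cos (θ / 2) / sin (θ / 2) :=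
  cfun_eq_mul_cos_div_sin (sin_pos_of_pos_of_lt_pi (by linarith) (by linarith)).ne'

lemma cfun_pos {θ : ℝ} (h0 : 0 ≤ θ) (hπ : θ < π) : 0 < cfun θ := by
  rcases h0.eq_or_lt with rfl | h0
  · rw [cfun_zero]; exact one_pos
  have hs : 0 < sin (θ / 2) := sin_pos_of_pos_of_lt_pi (by linarith) (by linarith)
  have hc : 0 < cos (θ / 2) := cos_pos_of_mem_Ioo ⟨by linarith, by linarith⟩
  rw [cfun_eq_of_pos h0 hπ]
  positivity

lemma cfun_le_one {θ : ℝ} (h0 : 0 ≤ θ) (hπ : θ < π) : cfun θ ≤ 1 := by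
  rcases h0.eq_or_lt with rfl | h0
  · rw [cfun_zero]
  have hs : 0 < sin (θ / 2) := sin_pos_of_pos_of_lt_pi (by linarith) (by linarith)
  have hc : 0 < cos (θ / 2) := cos_pos_of_mem_Ioo ⟨by linarith, by linarith⟩
  have htan := lt_tan (x := θ / 2) (by linarith) (by linarith)
  rw [tan_eq_sin_div_cos, lt_div_iff₀ hc] at htan
  rw [cfun_eq_of_pos h0 hπ, div_le_one hs]
  exact htan.le

lemma cfun_antitoneOn : AntitoneOn cfun (Set.Ico 0 π) := by
  intro a ha b hb hab
  rcases ha.1.eq_or_lt with rfl | ha0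
  · rw [cfun_zero]; exact cfun_le_one hb.1 hb.2
  rw [cfun_eq_of_pos ha0 ha.2, cfun_eq_of_pos (ha0.trans_le hab) hb.2]
  exact mul_cos_div_sin_le (by linarith) (by linarith) (by linarith [hb.2])

lemma dotProduct_hatm_mulVec_self (p ν : Fin 3 → ℝ) : ν ⬝ᵥ hatm p *ᵥ ν = 0 := by
  simp [hatm, dotProduct, mulVec, Fin.sum_univ_three]
  ring

lemma dotProduct_Lmat_mulVec_self {x : Fin 3 → ℝ} (hx : x ≠ 0) (ν : Fin 3 → ℝ) :
    ν ⬝ᵥ Lmat x *ᵥ ν = cfun (norm2 x) * (ν ⬝ᵥ ν)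
      + (1 - cfun (norm2 x)) / norm2 x ^ 2 * (x ⬝ᵥ ν) ^ 2 := by
  simp only [Lmat, if_neg hx, add_mulVec, smul_mulVec, one_mulVec, vecMulVec_mulVec,
    dotProduct_add, dotProduct_smul, dotProduct_hatm_mulVec_self]
  simp [dotProduct_comm ν x, sq]

lemma cfun_mul_le_dotProduct_Lmat_mulVec {r : ℝ} (hr : r < π) {x : Fin 3 → ℝ}
    (hx : norm2 x ≤ r) (ν : Fin 3 → ℝ) : cfun r * (ν ⬝ᵥ ν) ≤ ν ⬝ᵥ Lmat x *ᵥ ν := by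
  have hx0 : 0 ≤ norm2 x := sqrt_nonneg _
  have hνν : 0 ≤ ν ⬝ᵥ ν := Finset.sum_nonneg fun i _ => mul_self_nonneg (ν i)
  by_cases hx' : x = 0
  · rw [Lmat, if_pos hx', one_mulVec]
    nlinarith [cfun_le_one (hx0.trans hx) hr]
  have hcr : cfun r ≤ cfun (norm2 x) := cfun_antitoneOn ⟨hx0, hx.trans_lt hr⟩ ⟨hx0.trans hx, hr⟩ hx
  have hc1 : 0 ≤ 1 - cfun (norm2 x) := sub_nonneg.mpr (cfun_le_one hx0 (hx.trans_lt hr))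
  rw [dotProduct_Lmat_mulVec_self hx']
  nlinarith [mul_le_mul_of_nonneg_right hcr hνν, div_nonneg hc1 (sq_nonneg (norm2 x)),
    mul_nonneg (div_nonneg hc1 (sq_nonneg (norm2 x))) (sq_nonneg (x ⬝ᵥ ν))]

lemma SignSel.mul_eq_abs {k : Type*} {s z : k → ℝ} (hs : SignSel s z) (ℓ : k) :
    z ℓ * s ℓ = |z ℓ| := by
  rcases lt_trichotomy (z ℓ) 0 with h | h | h
  · rw [(hs ℓ).2 h.ne, sign_of_neg h, abs_of_neg h, mul_neg_one]
  · rw [h, zero_mul, abs_zero]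
  · rw [(hs ℓ).2 h.ne', sign_of_pos h, abs_of_pos h, mul_one]

lemma SignSel.dotProduct_eq_sum_abs {k : Type*} [Fintype k] {s z : k → ℝ} (hs : SignSel s z) :
    z ⬝ᵥ s = ∑ ℓ, |z ℓ| :=
  Finset.sum_congr rfl fun ℓ _ => hs.mul_eq_abs ℓ

lemma inv_card_le_sum_sq_of_dotProduct_eq {ι : Type*} [Fintype ι] {g ν : ι → ℝ} {Z : ℝ}
    (hZ : 0 < Z) (hg : ∀ i, |g i| ≤ Z) (hgν : g ⬝ᵥ ν = Z) :
    1 / Fintype.card ι ≤ ∑ i, ν i ^ 2 := by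
  have hl1 : Z * 1 ≤ Z * ∑ i, |ν i| := calc
    Z * 1 = ∑ i, g i * ν i := by rw [mul_one, ← hgν]; rfl
    _ ≤ ∑ i, |g i| * |ν i| := Finset.sum_le_sum fun i _ => by
      rw [← abs_mul]; exact le_abs_self _
    _ ≤ ∑ i, Z * |ν i| := Finset.sum_le_sum fun i _ =>
      mul_le_mul_of_nonneg_right (hg i) (abs_nonneg _)
    _ = Z * ∑ i, |ν i| := (Finset.mul_sum _ _ _).symm
  have hcs : (∑ i, |ν i|) ^ 2 ≤ Fintype.card ι * ∑ i, ν i ^ 2 := by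
    simpa only [sq_abs, Finset.card_univ] using
      sq_sum_le_card_mul_sum_sq (s := Finset.univ) (f := fun i => |ν i|)
  have h1 : 1 ≤ (Fintype.card ι : ℝ) * ∑ i, ν i ^ 2 := by
    nlinarith [le_of_mul_le_mul_left hl1 hZ]
  have hcard : (0 : ℝ) < Fintype.card ι := by
    by_contra! h
    nlinarith [Finset.sum_nonneg fun i (_ : i ∈ Finset.univ) => sq_nonneg (ν i)]
  rwa [div_le_iff₀ hcard, mul_comm]

section OrientedGraph

variable {V E : Type*}

def underlyingGraph (te he : E → V) : SimpleGraph V :=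
  SimpleGraph.fromRel fun i j => ∃ e, te e = i ∧ he e = j

def orientedIncidence [DecidableEq V] (te he : E → V) : Matrix V E ℝ :=
  Matrix.of fun i e => if i = te e then 1 else if i = he e then -1 else 0

lemma exists_edge_of_adj {te he : E → V} {a b : V} (h : (underlyingGraph te he).Adj a b) :
    ∃ e, s(te e, he e) = s(a, b) := by
  rcases ((SimpleGraph.fromRel_adj _ _ _).mp h).2 with ⟨e, rfl, rfl⟩ | ⟨e, rfl, rfl⟩
  · exact ⟨e, rfl⟩
  · exact ⟨e, Sym2.eq_swap⟩

lemma abs_sub_le_sum_of_isTrail [DecidableEq V] [Fintype E] {te he : E → V} (f : V → ℝ)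
    {u v : V} {w : (underlyingGraph te he).Walk u v} (hw : w.IsTrail) :
    |f u - f v| ≤ ∑ e with s(te e, he e) ∈ w.edges, |f (te e) - f (he e)| := by
  classical
  induction w with
  | nil => simp
  | @cons a b c hab p ih =>
    rw [SimpleGraph.Walk.isTrail_cons] at hw
    obtain ⟨e₀, he₀⟩ := exists_edge_of_adj hab
    have hval : |f (te e₀) - f (he e₀)| = |f a - f b| := by
      rcases Sym2.eq_iff.mp he₀ with ⟨h1, h2⟩ | ⟨h1, h2⟩
      · rw [h1, h2]
      · rw [h1, h2, abs_sub_comm]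
    have hnew : e₀ ∉ Finset.univ.filter fun e => s(te e, he e) ∈ p.edges := by
      simpa [he₀] using hw.2
    have hsub : insert e₀ (Finset.univ.filter fun e => s(te e, he e) ∈ p.edges) ⊆
        Finset.univ.filter fun e => s(te e, he e) ∈ (SimpleGraph.Walk.cons hab p).edges := by
      intro e
      simp only [Finset.mem_insert, Finset.mem_filter, Finset.mem_univ, true_and,
        SimpleGraph.Walk.edges_cons, List.mem_cons]
      rintro (rfl | h)
      exacts [Or.inl he₀, Or.inr h]
    calc |f a - f c| ≤ |f a - f b| + |f b - f c| := abs_sub_le _ _ _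
      _ ≤ |f (te e₀) - f (he e₀)| + ∑ e with s(te e, he e) ∈ p.edges, |f (te e) - f (he e)| := by
        rw [hval]; gcongr; exact ih hw.1
      _ = ∑ e ∈ insert e₀ (Finset.univ.filter fun e => s(te e, he e) ∈ p.edges),
          |f (te e) - f (he e)| := by rw [Finset.sum_insert hnew]
      _ ≤ _ := Finset.sum_le_sum_of_subset_of_nonneg hsub fun _ _ _ => abs_nonneg _

lemma abs_sub_le_sum_of_connected [Fintype E] {te he : E → V}
    (hconn : (underlyingGraph te he).Connected) (f : V → ℝ) (u v : V) :
    |f u - f v| ≤ ∑ e, |f (te e) - f (he e)| := by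
  classical
  obtain ⟨w⟩ := hconn.preconnected u v
  exact (abs_sub_le_sum_of_isTrail f w.bypass_isPath.isTrail).trans
    (Finset.sum_le_sum_of_subset_of_nonneg (Finset.subset_univ _) fun _ _ _ => abs_nonneg _)

variable [DecidableEq V] [Fintype V]

lemma orientedIncidence_transpose_mulVec {te he : E → V} (hloop : ∀ e, te e ≠ he e)
    (f : V → ℝ) (e : E) : ((orientedIncidence te he)ᵀ *ᵥ f) e = f (te e) - f (he e) := by
  have hsplit : ∀ i, orientedIncidence te he i e * f i =
      (if i = te e then f i else 0) + (if i = he e then -f i else 0) := by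
    intro i
    by_cases h1 : i = te e
    · simp [orientedIncidence, h1, hloop e]
    · by_cases h2 : i = he e <;> simp [orientedIncidence, h1, h2, (hloop e).symm]
  simp only [mulVec, dotProduct, transpose_apply, hsplit, Finset.sum_add_distrib,
    Finset.sum_ite_eq', Finset.mem_univ, if_true]
  ring

lemma inv_card_le_sum_sq_orientedIncidence_mulVec [Fintype E] {te he : E → V}
    (hloop : ∀ e, te e ≠ he e) (hconn : (underlyingGraph te he).Connected)
    {f : V → ℝ} (hf : ∃ p q, f p ≠ f q) {s : E → ℝ}
    (hs : SignSel s ((orientedIncidence te he)ᵀ *ᵥ f)) :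
    1 / Fintype.card V ≤ ∑ i, (orientedIncidence te he *ᵥ s) i ^ 2 := by
  obtain ⟨p, q, hpq⟩ := hf
  set Z := ∑ e, |f (te e) - f (he e)|
  have hspread := abs_sub_le_sum_of_connected hconn f
  have hfν : f ⬝ᵥ orientedIncidence te he *ᵥ s = Z := by
    rw [dotProduct_mulVec, ← mulVec_transpose, hs.dotProduct_eq_sum_abs]
    simp only [orientedIncidence_transpose_mulVec hloop, Z]
  have hconst : (fun _ => f q) ⬝ᵥ orientedIncidence te he *ᵥ s = 0 := by
    have hzero : (orientedIncidence te he)ᵀ *ᵥ (fun _ => f q) = 0 :=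
      funext fun e => (orientedIncidence_transpose_mulVec hloop _ e).trans (sub_self _)
    rw [dotProduct_mulVec, ← mulVec_transpose, hzero, zero_dotProduct]
  refine inv_card_le_sum_sq_of_dotProduct_eq (g := fun i => f i - f q)
    ((abs_pos.mpr (sub_ne_zero.mpr hpq)).trans_le (hspread p q)) (fun i => hspread i q) ?_
  rw [show (fun i => f i - f q) = f - fun _ => f q from rfl, sub_dotProduct, hfν, hconst,
    sub_zero]

end OrientedGraph

/-- strict Lie-derivative bound off consensus. With ν = B̂ s
(block `i` is `∑ e, B i e • s e`), one has νᵀ Lₓ ν ≥ c(r)/n > 0. -/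
theorem strict_lie_derivative_bound {n m : ℕ}
    (te he : Fin m → Fin n) (hloop : ∀ e, te e ≠ he e)
    (hconn : (SimpleGraph.fromRel (fun i j => ∃ e, te e = i ∧ he e = j)).Connected)
    (B : Matrix (Fin n) (Fin m) ℝ)
    (hB : ∀ i e, B i e = if i = te e then 1 else if i = he e then -1 else 0)
    (r : ℝ) (hr : r < Real.pi)
    (x : Fin n → Fin 3 → ℝ) (hx : ∀ i, norm2 (x i) ≤ r)
    (hnc : ∃ i j, x i ≠ x j)
    (s : Fin m → Fin 3 → ℝ)
    (hs : SignSelV s (fun e k => ∑ i, B i e * x i k)) :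
    cfun r / n ≤ ∑ i, (∑ e, B i e • s e) ⬝ᵥ (Lmat (x i)).mulVec (∑ e, B i e • s e) ∧
    0 < cfun r / n := by
  obtain ⟨p, q, hpq⟩ := hnc
  obtain ⟨k, hk⟩ := Function.ne_iff.mp hpq
  obtain rfl : B = orientedIncidence te he := Matrix.ext hB
  have hc : 0 < cfun r := cfun_pos ((sqrt_nonneg _).trans (hx p)) hr
  have hn : 0 < (n : ℝ) := Nat.cast_pos.mpr p.pos
  set ν := fun i => ∑ e, orientedIncidence te he i e • s e
  have hνk : ∀ i, ν i k = (orientedIncidence te he *ᵥ fun e => s e k) i := fun i => by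
    simp [ν, mulVec, dotProduct, Finset.sum_apply]
  have hgraph := inv_card_le_sum_sq_orientedIncidence_mulVec hloop hconn
    (f := fun i => x i k) ⟨p, q, hk⟩ (s := fun e => s e k) fun e => hs e k
  rw [Fintype.card_fin] at hgraph
  refine ⟨?_, div_pos hc hn⟩
  calc cfun r / n = cfun r * (1 / n) := by ring
    _ ≤ cfun r * ∑ i, ν i k ^ 2 := by simp_rw [hνk]; gcongr
    _ ≤ ∑ i, cfun r * (ν i ⬝ᵥ ν i) := by
      rw [Finset.mul_sum]
      gcongr with i
      rw [sq]
      exact Finset.single_le_sum (fun j _ => mul_self_nonneg (ν i j)) (Finset.mem_univ k)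
    _ ≤ _ := Finset.sum_le_sum fun i _ => cfun_mul_le_dotProduct_Lmat_mulVec hr (hx i) (ν i)
end
end
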